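/- arXiv:1911.01242 — 4 statements merged into one kernel-verified Lean document; each statement's English description precedes it below -/
import Mathlib

section
/- Let A be a ring and P₁, …, Pₙ prime two-sided ideals of A with Pᵢ ⊄ Pⱼ for all i ≠ j, and let P = P₁ ∩ … ∩ Pₙ. Then the canonical ring homomorphism A/P → A/P₁ × … × A/Pₙ is an essential extension of left A-modules. -/
/-- Let `A` be a ring and `P₁, …, Pₙ` prime two-sided ideals of `A` with `Pᵢ ⊄ Pⱼ` for
`i ≠ j`, and let `Q = P₁ ∩ … ∩ Pₙ`.  Then the canonical homomorphism
`A/Q → A/P₁ × … × A/Pₙ` (characterized by `a + Q ↦ (a + P₁, …, a + Pₙ)`) is an essential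
extension of left `A`-modules: every nonzero submodule of the product meets its range
nontrivially. -/
theorem quotient_inf_primes_essential {A : Type*} [Ring A] {n : ℕ} (P : Fin n → Ideal A)
    (htwosided : ∀ i, ∀ a ∈ P i, ∀ r : A, a * r ∈ P i)
    (hproper : ∀ i, P i ≠ ⊤)
    (hprime : ∀ i, ∀ a b : A, (∀ x : A, a * x * b ∈ P i) → a ∈ P i ∨ b ∈ P i)
    (hnc : ∀ i j, i ≠ j → ¬ P i ≤ P j)
    (Q : Ideal A) (hQ : Q = ⨅ i, P i)
    (f : (A ⧸ Q) →ₗ[A] ((i : Fin n) → A ⧸ P i))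
    (hf : ∀ a : A, f (Submodule.Quotient.mk a) = fun i => Submodule.Quotient.mk a) :
    ∀ N : Submodule A ((i : Fin n) → A ⧸ P i), N ≠ ⊥ → N ⊓ LinearMap.range f ≠ ⊥ := by
  classical
  intro N hN
  obtain ⟨x, hxN, hx0⟩ := Submodule.exists_mem_ne_zero_of_ne_bot hN
  obtain ⟨j, hj⟩ : ∃ j, x j ≠ 0 := by
    by_contra h
    push_neg at h
    exact hx0 (funext h)
  choose a ha using fun i => Submodule.Quotient.mk_surjective _ (x i)
  have haj : a j ∉ P j := by
    intro h
    apply hj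
    rw [← ha j]
    exact (Submodule.Quotient.mk_eq_zero _).2 h
  have key : ∀ S : Finset (Fin n), j ∉ S →
      ∃ r : A, (∀ i ∈ S, r ∈ P i) ∧ r * a j ∉ P j := by
    intro S
    induction S using Finset.induction_on with
    | empty => exact fun _ => ⟨1, by simp, by simpa using haj⟩
    | @insert k S hkS ih =>
      intro hjS
      have hjk : j ≠ k := fun h => hjS (by simp [h])
      obtain ⟨r, hrS, hrj⟩ := ih (fun h => hjS (Finset.mem_insert_of_mem h))
      have hk : ¬ P k ≤ P j := hnc k j (Ne.symm hjk)
      obtain ⟨c, hck, hcj⟩ := Set.not_subset.1 hk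
      have : ¬ ∀ x : A, c * x * (r * a j) ∈ P j := by
        intro hx
        rcases hprime j c (r * a j) hx with h | h
        · exact hcj h
        · exact hrj h
      push_neg at this
      obtain ⟨t, ht⟩ := this
      refine ⟨c * t * r, ?_, ?_⟩
      · intro i hi
        rcases Finset.mem_insert.1 hi with rfl | hi
        · have := htwosided i c hck (t * r)
          rwa [← mul_assoc] at this
        · exact Ideal.mul_mem_left _ _ (hrS i hi)
      · rwa [mul_assoc]
  obtain ⟨r, hrS, hrj⟩ := key (Finset.univ.erase j) (Finset.notMem_erase j _)
  have hr : ∀ i, i ≠ j → r ∈ P i := fun i hij =>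
    hrS i (Finset.mem_erase.2 ⟨hij, Finset.mem_univ i⟩)
  set y : (i : Fin n) → A ⧸ P i := r • x with hy
  have hyi : ∀ i, y i = Submodule.Quotient.mk (r * a i) := by
    intro i
    show r • x i = _
    rw [← ha i, ← Submodule.Quotient.mk_smul, smul_eq_mul]
  have hyf : y = f (Submodule.Quotient.mk (r * a j)) := by
    funext i
    rw [hf, hyi i]
    by_cases hij : i = j
    · subst hij; rfl
    · have h1 : r * a i ∈ P i := htwosided i r (hr i hij) (a i)
      have h2 : r * a j ∈ P i := htwosided i r (hr i hij) (a j)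
      rw [(Submodule.Quotient.mk_eq_zero _).2 h1]
      exact ((Submodule.Quotient.mk_eq_zero _).2 h2).symm
  have hymem : y ∈ N ⊓ LinearMap.range f :=
    ⟨Submodule.smul_mem N r hxN, ⟨Submodule.Quotient.mk (r * a j), hyf.symm⟩⟩
  have hy0 : y ≠ 0 := by
    intro h
    apply hrj
    have : y j = 0 := by rw [h]; rfl
    rw [hyi j] at this
    exact (Submodule.Quotient.mk_eq_zero _).1 this
  intro hbot
  rw [hbot] at hymem
  exact hy0 (Submodule.mem_bot _ |>.1 hymem)
end

section
/- Let A be a left noetherian ring, I an indecomposable injective left A-module, and f an endomorphism of I. Then f is either an automorphism or locally nilpotent, i.e. for every x ∈ I there is n ∈ ℕ with fⁿ(x) = 0. -/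
/-!
An idempotent endomorphism of an indecomposable module is `0` or `1`. If `f` is injective, then
injectivity of `I` gives `r` with `r ∘ f = id`, and `f ∘ r` is an idempotent which is not `0`,
so `f` is surjective. An indecomposable injective module is uniform: for disjoint `N, N'`, a
double complement argument (`C ⊇ N'` maximal disjoint from `N`, then `M ⊇ N` maximal disjoint
from `C`) together with injectivity produces an idempotent which is the identity on `N` and
vanishes on `N'`. If `f` is not injective, the annihilators of `fⁿ x` form an ascending chain of
left ideals, so they stabilise at some `n`; then `A ∙ fⁿ x` meets `ker f ≠ 0` trivially, and
uniformity forces `fⁿ x = 0`.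
-/

/-- A module is indecomposable if it is nonzero and is not the direct sum of two nonzero
submodules. -/
def Module.Indecomposable (A : Type*) [Ring A] (M : Type*) [AddCommGroup M]
    [Module A M] : Prop :=
  Nontrivial M ∧ ∀ N N' : Submodule A M, IsCompl N N' → N = ⊥ ∨ N' = ⊥

open Submodule LinearMap

theorem exists_le_maximal_disjoint {α : Type*} [CompleteLattice α] [IsCompactlyGenerated α]
    {a b : α} (h : Disjoint a b) : ∃ c, a ≤ c ∧ Maximal (Disjoint · b) c :=
  zorn_le_nonempty₀ {c | Disjoint c b}
    (fun _ hs hchain _ _ => ⟨_, hchain.directedOn.disjoint_sSup_left.2 hs, fun _ => le_sSup⟩) a h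

section

variable {A M : Type*} [Ring A] [AddCommGroup M] [Module A M]

theorem exists_disjoint_span_pow_apply_ker [IsNoetherianRing A] (f : Module.End A M) (x : M) :
    ∃ n : ℕ, Disjoint (A ∙ (f ^ n) x) (ker f) := by
  let ann : ℕ →o Submodule A A :=
    ⟨fun n => ker (toSpanSingleton A M ((f ^ n) x)), fun m n hmn a ha => by
      simp only [mem_ker, toSpanSingleton_apply] at ha ⊢
      rw [← Nat.sub_add_cancel hmn, pow_add, Module.End.mul_apply, ← map_smul, ha, map_zero]⟩
  obtain ⟨n, hn⟩ := monotone_stabilizes_iff_noetherian.mpr inferInstance ann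
  refine ⟨n, disjoint_def.2 fun y hy hfy => ?_⟩
  obtain ⟨a, rfl⟩ := mem_span_singleton.1 hy
  have ha : a ∈ ann (n + 1) := by
    show a • (f ^ (n + 1)) x = 0
    rwa [pow_succ', Module.End.mul_apply, ← map_smul]
  rwa [← hn (n + 1) n.le_succ] at ha

namespace Module.Injective

variable [Module.Injective A M]

theorem exists_eq_self_and_eq_zero_of_disjoint {N C : Submodule A M} (h : Disjoint N C) :
    ∃ e : Module.End A M, (∀ x ∈ N, e x = x) ∧ ∀ x ∈ C, e x = 0 := by
  have hinj : Function.Injective (N.subtype.coprod C.subtype) := by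
    rw [← ker_eq_bot, ker_coprod_of_disjoint_range _ _ (by simpa using h)]
    simp
  obtain ⟨e, he⟩ := Module.Injective.out _ hinj (N.subtype ∘ₗ fst A N C)
  exact ⟨e, fun x hx => by simpa using he (⟨x, hx⟩, 0), fun x hx => by simpa using he (0, ⟨x, hx⟩)⟩

/-- Complements in an injective module are direct summands. -/
theorem exists_isIdempotentElem_of_maximal_disjoint {N C : Submodule A M}
    (hC : Maximal (Disjoint · N) C) :
    ∃ e : Module.End A M, IsIdempotentElem e ∧ N ≤ range e ∧ C ≤ ker e := by
  obtain ⟨K, hNK, hK⟩ := exists_le_maximal_disjoint hC.prop.symm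
  obtain ⟨e, he_self, he_zero⟩ := exists_eq_self_and_eq_zero_of_disjoint hK.prop
  have hcomap : C.comap e = C := by
    refine hC.eq_of_ge (disjoint_def.2 fun x hx hxN => ?_) fun x hx => by simp [he_zero x hx]
    rw [mem_comap, he_self x (hNK hxN)] at hx
    exact disjoint_def.1 hC.prop x hx hxN
  have hrange : range e = K := by
    refine hK.eq_of_ge (disjoint_def.2 ?_) fun x hx => ⟨x, he_self x hx⟩
    rintro _ ⟨x, rfl⟩ hx
    rw [← hcomap] at he_zero
    exact he_zero x hx
  refine ⟨e, LinearMap.ext fun x => he_self _ (hrange ▸ mem_range_self e x), hrange ▸ hNK,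
    fun x hx => he_zero x hx⟩

end Module.Injective

namespace Module.Indecomposable

theorem isIdempotentElem_eq_zero_or_one (hind : Module.Indecomposable A M)
    {e : Module.End A M} (he : IsIdempotentElem e) : e = 0 ∨ e = 1 :=
  (hind.2 _ _ he.isCompl).imp range_eq_bot.1 fun hker =>
    LinearMap.ext fun x => ker_eq_bot.1 hker (LinearMap.congr_fun he x)

theorem surjective_of_injective [Module.Injective A M] (hind : Module.Indecomposable A M)
    {f : Module.End A M} (hf : Function.Injective f) : Function.Surjective f := by
  obtain ⟨r, hr⟩ := Module.Injective.out f hf LinearMap.id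
  have hrf : r * f = 1 := LinearMap.ext hr
  have hidem : IsIdempotentElem (f * r) := by
    rw [IsIdempotentElem, mul_assoc, ← mul_assoc r, hrf, one_mul]
  rcases hind.isIdempotentElem_eq_zero_or_one hidem with h0 | h1
  · have hf0 : f = 0 := by rw [← mul_one f, ← hrf, ← mul_assoc, h0, zero_mul]
    obtain ⟨x, y, hxy⟩ := hind.1
    exact absurd (hf (by simp [hf0])) hxy
  · exact fun x => ⟨r x, LinearMap.congr_fun h1 x⟩

theorem eq_bot_or_eq_bot_of_disjoint [Module.Injective A M] (hind : Module.Indecomposable A M)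
    {N N' : Submodule A M} (h : Disjoint N N') : N = ⊥ ∨ N' = ⊥ := by
  obtain ⟨C, hN'C, hC⟩ := exists_le_maximal_disjoint h.symm
  obtain ⟨e, he, hNe, hCe⟩ := Module.Injective.exists_isIdempotentElem_of_maximal_disjoint hC
  rcases hind.isIdempotentElem_eq_zero_or_one he with rfl | rfl
  · exact Or.inl (by simpa using hNe)
  · exact Or.inr (by simpa [Module.End.one_eq_id] using hN'C.trans hCe)

end Module.Indecomposable

end

/-- Let `A` be a left noetherian ring, `I` an indecomposable injective left `A`-module
and `f` an endomorphism of `I`.  Then `f` is either an automorphism or locally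
nilpotent (for every `x ∈ I` there is `n` with `fⁿ x = 0`). -/
theorem endo_of_indecomposable_injective_bijective_or_locally_nilpotent
    {A : Type*} [Ring A] [IsNoetherianRing A] (I : Type*) [AddCommGroup I] [Module A I]
    [Module.Injective A I] (hind : Module.Indecomposable A I) (f : I →ₗ[A] I) :
    Function.Bijective f ∨ ∀ x : I, ∃ n : ℕ, (f ^ n) x = 0 := by
  by_cases hf : Function.Injective f
  · exact Or.inl ⟨hf, hind.surjective_of_injective hf⟩
  refine Or.inr fun x => ?_
  obtain ⟨n, hn⟩ := exists_disjoint_span_pow_apply_ker f x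
  have hker : ker f ≠ ⊥ := mt ker_eq_bot.1 hf
  exact ⟨n, span_singleton_eq_bot.1 ((hind.eq_bot_or_eq_bot_of_disjoint hn).resolve_right hker)⟩
end

section
/- Let R be a reduced excellent commutative ring of Krull dimension one with total ring of fractions K, U a finitely generated K-module, and L ⊆ U an R-lattice (a finitely generated R-submodule with K·L = U). Then L equals the set of x ∈ U whose image in the completion Û_m = K̂_m ⊗_K U lies in the image of L̂_m = R̂_m ⊗_R L, for every maximal ideal m of R. -/
/-!
Everything happens in `Q = U ⧸ L`: if `x ∉ L`, its class `q` is nonzero, so `J = Ann(q)` lies in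
a maximal ideal `𝔪`. The hypothesis at `𝔪` says that `1 ⊗ q = 0` in `R̂_𝔪 ⊗ Q`. Since `R̂_𝔪` is
flat over the noetherian ring `R`, tensoring the injection `R ⧸ J ≅ R ∙ q ↪ Q` shows
`1 ⊗ 1 = 0` in `R̂_𝔪 ⊗ R ⧸ J ≅ R̂_𝔪 ⧸ J R̂_𝔪`, i.e. `J R̂_𝔪 = R̂_𝔪`. But `𝔪 R̂_𝔪` is a proper
ideal, as `R̂_𝔪` maps onto `R ⧸ 𝔪`.
-/

open scoped TensorProduct

/-- Stand-in for excellence of a one-dimensional reduced noetherian ring.  Excellent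
rings are not yet available in Mathlib; we encode the consequence of excellence that is
used throughout the paper, namely that the completion at every maximal ideal is again
reduced ("analytically reduced"). -/
def IsExcellentStandIn (R : Type*) [CommRing R] : Prop :=
  ∀ m : Ideal R, m.IsMaximal → IsReduced (AdicCompletion m R)

theorem Ideal.mem_map_torsionOf_of_tmul_eq_zero {R A Q : Type*} [CommRing R] [CommRing A]
    [Algebra R A] [Module.Flat R A] [AddCommGroup Q] [Module R Q] {a : A} {q : Q}
    (h : a ⊗ₜ[R] q = 0) : a ∈ (Ideal.torsionOf R Q q).map (algebraMap R A) := by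
  set J := torsionOf R Q q
  let φ : R ⧸ J →ₗ[R] Q := (R ∙ q).subtype ∘ₗ (quotTorsionOfEquivSpanSingleton R Q q).toLinearMap
  have hφ : Function.Injective φ := Subtype.val_injective.comp (LinearEquiv.injective _)
  have hφ_one : φ (Quotient.mk J 1) = q := by
    simp only [φ, LinearMap.comp_apply, LinearEquiv.coe_coe, Submodule.subtype_apply]
    rw [← Quotient.mk_eq_mk, quotTorsionOfEquivSpanSingleton_apply_mk, one_smul]
  have h_one : a ⊗ₜ[R] Quotient.mk J 1 = 0 :=
    Module.Flat.lTensor_preserves_injective_linearMap φ hφ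
      (by rw [LinearMap.lTensor_tmul, hφ_one, h, map_zero])
  have h_quot := congrArg (Algebra.TensorProduct.quotIdealMapEquivTensorQuot A J).symm h_one
  rwa [Algebra.TensorProduct.quotIdealMapEquivTensorQuot_symm_tmul, map_zero, one_smul,
    Submodule.Quotient.mk_eq_zero] at h_quot

theorem AdicCompletion.map_algebraMap_ne_top {R : Type*} [CommRing R] {I : Ideal R}
    (hI : I ≠ ⊤) : I.map (algebraMap R (AdicCompletion I R)) ≠ ⊤ := by
  intro h
  have hbot := congrArg (Ideal.map (evalₐ I 1 : AdicCompletion I R →+* R ⧸ I ^ 1)) h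
  rw [Ideal.map_map, AlgHom.comp_algebraMap, Ideal.map_top, Ideal.Quotient.algebraMap_eq,
    pow_one, Ideal.map_quotient_self] at hbot
  have : Nontrivial (R ⧸ I) := Ideal.Quotient.nontrivial_iff.mpr hI
  exact bot_ne_top hbot

theorem Submodule.tmul_mkQ_eq_zero_of_tmul_mem_span {R A U : Type*} [CommRing R] [Semiring A]
    [Algebra R A] [AddCommGroup U] [Module R U] {L : Submodule R U} {x : U}
    (hx : (1 : A) ⊗ₜ[R] x ∈ Submodule.span A ((fun y : U => (1 : A) ⊗ₜ[R] y) '' L)) :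
    (1 : A) ⊗ₜ[R] L.mkQ x = 0 := by
  have hspan : Submodule.span A ((fun y : U => (1 : A) ⊗ₜ[R] y) '' L) ≤
      LinearMap.ker (L.mkQ.baseChange A) := by
    rw [Submodule.span_le]
    rintro _ ⟨y, hy, rfl⟩
    rw [SetLike.mem_coe, LinearMap.mem_ker, LinearMap.baseChange_tmul, L.mkQ_apply,
      (Submodule.Quotient.mk_eq_zero L).mpr hy, TensorProduct.tmul_zero]
  simpa using hspan hx

theorem Submodule.mem_of_forall_tmul_mem_span_adicCompletion {R U : Type*} [CommRing R]
    [IsNoetherianRing R] [AddCommGroup U] [Module R U] {L : Submodule R U} {x : U}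
    (hx : ∀ m : Ideal R, m.IsMaximal →
      (1 ⊗ₜ[R] x : AdicCompletion m R ⊗[R] U) ∈
        Submodule.span (AdicCompletion m R)
          ((fun y : U => (1 ⊗ₜ[R] y : AdicCompletion m R ⊗[R] U)) '' L)) :
    x ∈ L := by
  by_contra hxL
  have hJ : Ideal.torsionOf R (U ⧸ L) (L.mkQ x) ≠ ⊤ := by
    rwa [Ne, Ideal.torsionOf_eq_top_iff, Submodule.mkQ_apply, Submodule.Quotient.mk_eq_zero]
  obtain ⟨m, hm, hJm⟩ := Ideal.exists_le_maximal _ hJ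
  have h_one :=
    Ideal.mem_map_torsionOf_of_tmul_eq_zero (tmul_mkQ_eq_zero_of_tmul_mem_span (hx m hm))
  exact AdicCompletion.map_algebraMap_ne_top hm.ne_top
    ((Ideal.eq_top_iff_one _).mpr (Ideal.map_mono hJm h_one))

theorem lattice_eq_of_all_completions_general
    (R : Type*) [CommRing R] [IsNoetherianRing R]
    (U : Type*) [AddCommGroup U] [Module R U]
    (L : Submodule R U) :
    (L : Set U) = {x : U | ∀ m : Ideal R, m.IsMaximal →
      (1 ⊗ₜ[R] x : AdicCompletion m R ⊗[R] U) ∈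
        Submodule.span (AdicCompletion m R)
          ((fun y : U => (1 ⊗ₜ[R] y : AdicCompletion m R ⊗[R] U)) '' L)} := by
  ext x
  exact ⟨fun hx _ _ => Submodule.subset_span ⟨x, hx, rfl⟩,
    Submodule.mem_of_forall_tmul_mem_span_adicCompletion⟩

/-- Let `R` be a reduced excellent commutative noetherian ring of Krull dimension one
with total ring of fractions `K`, `U` a finitely generated `K`-module, and `L ⊆ U` an
`R`-lattice (a finitely generated `R`-submodule with `K·L = U`).  Then `L` equals the
set of `x ∈ U` whose image in the completion `Û_𝔪 = R̂_𝔪 ⊗[R] U` (which is canonically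
`K̂_𝔪 ⊗[K] U`) lies in the image of `L̂_𝔪 = R̂_𝔪 ⊗[R] L`, for every maximal ideal `𝔪`
of `R`. -/
theorem lattice_eq_of_all_completions
    (R : Type*) [CommRing R] [IsNoetherianRing R] [IsReduced R]
    (hdim : ringKrullDim R = 1) (hexc : IsExcellentStandIn R)
    (U : Type*) [AddCommGroup U] [Module (FractionRing R) U]
    [Module.Finite (FractionRing R) U] [Module R U]
    [IsScalarTower R (FractionRing R) U]
    (L : Submodule R U) (hLfg : L.FG)
    (hLfull : Submodule.span (FractionRing R) (L : Set U) = ⊤) :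
    (L : Set U) = {x : U | ∀ m : Ideal R, m.IsMaximal →
      (1 ⊗ₜ[R] x : AdicCompletion m R ⊗[R] U) ∈
        Submodule.span (AdicCompletion m R)
          ((fun y : U => (1 ⊗ₜ[R] y : AdicCompletion m R ⊗[R] U)) '' L)} :=
  lattice_eq_of_all_completions_general R U L
end

section
/- Let R be a reduced excellent commutative ring of Krull dimension one with total ring of fractions K, Λ a semisimple K-algebra, A ⊆ Λ an R-order, and B an overorder of A (an R-order with A ⊆ B ⊆ Λ). If A and B are isomorphic as left A-modules, then A = B. -/
/-- Given subalgebras `A ≤ B` of `Λ`, the subset `B` regarded as a left module over the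
subring `A` (acting by multiplication in `Λ`). -/
def subalgebraAsSubmodule {R Λ : Type*} [CommRing R] [Ring Λ] [Algebra R Λ]
    (A B : Subalgebra R Λ) (h : A ≤ B) : Submodule ↥A Λ where
  carrier := B
  add_mem' := fun ha hb => add_mem ha hb
  zero_mem' := B.zero_mem
  smul_mem' := fun c x hx => B.mul_mem (h c.2) hx


/-- In a semisimple (hence left-noetherian) ring, a left inverse is a two-sided
inverse: if `a * b = 1` then `b * a = 1`. -/
lemma mul_eq_one_symm_of_semisimple {Λ : Type*} [Ring Λ] [IsSemisimpleRing Λ]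
    {a b : Λ} (h : a * b = 1) : b * a = 1 := by
  have : IsNoetherianRing Λ := inferInstance
  let f : Λ →ₗ[Λ] Λ :=
    { toFun := fun x => x * b
      map_add' := fun x y => add_mul x y b
      map_smul' := fun c x => by simp [smul_eq_mul, mul_assoc] }
  have hsurj : Function.Surjective f := fun y =>
    ⟨y * a, by simp only [f, LinearMap.coe_mk, AddHom.coe_mk, mul_assoc, h, mul_one]⟩
  have hinj : Function.Injective f :=
    IsNoetherian.injective_of_surjective_endomorphism f hsurj
  have : f (b * a) = f 1 := by
    simp only [f, LinearMap.coe_mk, AddHom.coe_mk, one_mul, mul_assoc, h, mul_one]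
  exact hinj this

set_option synthInstance.maxHeartbeats 800000 in
set_option maxHeartbeats 1600000 in
/-- Let `R` be a reduced excellent commutative noetherian ring of Krull dimension one
with total ring of fractions `K`, `Λ` a semisimple `K`-algebra, `A ⊆ Λ` an `R`-order
(an `R`-subalgebra which is finitely generated as an `R`-module and spans `Λ` over `K`)
and `B` an overorder of `A`.  If `A` and `B` are isomorphic as left `A`-modules, then
`A = B`. -/
theorem overorder_eq_of_module_iso
    (R : Type*) [CommRing R] [IsNoetherianRing R] [IsReduced R]
    (hdim : ringKrullDim R = 1) (hexc : IsExcellentStandIn R)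
    (Λ : Type*) [Ring Λ] [Algebra (FractionRing R) Λ] [IsSemisimpleRing Λ]
    [Algebra R Λ] [IsScalarTower R (FractionRing R) Λ]
    (A B : Subalgebra R Λ)
    (hAfg : A.toSubmodule.FG)
    (hAfull : Submodule.span (FractionRing R) (A : Set Λ) = ⊤)
    (hBfg : B.toSubmodule.FG)
    (hBfull : Submodule.span (FractionRing R) (B : Set Λ) = ⊤)
    (hAB : A ≤ B)
    (hiso : Nonempty
      ((subalgebraAsSubmodule A A le_rfl) ≃ₗ[↥A] (subalgebraAsSubmodule A B hAB))) :
    A = B := by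
  obtain ⟨e⟩ := hiso
  -- the image of `1` under the isomorphism
  set b : Λ := (e ⟨1, A.one_mem⟩ : Λ) with hbdef
  have hbB : b ∈ B := (e ⟨1, A.one_mem⟩).2
  -- every element of B is of the form a * b with a ∈ A
  have hgen : ∀ x ∈ B, ∃ a : ↥A, (a : Λ) * b = x := by
    intro x hx
    obtain ⟨y, hy⟩ := e.surjective ⟨x, hx⟩
    refine ⟨⟨(y : Λ), y.2⟩, ?_⟩
    have hy' : y = (⟨(y : Λ), y.2⟩ : ↥A) • (⟨1, A.one_mem⟩ :
        subalgebraAsSubmodule A A le_rfl) := by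
      ext
      show (y : Λ) = (y : Λ) * 1
      rw [mul_one]
    have hsm : ((e y : Λ)) = (⟨(y : Λ), y.2⟩ : ↥A) • b := by
      conv_lhs => rw [hy', map_smul]
      rfl
    have h2 : ((⟨(y : Λ), y.2⟩ : ↥A) • b) = (y : Λ) * b := rfl
    show ((⟨(y : Λ), y.2⟩ : ↥A) : Λ) * b = x
    rw [← h2, ← hsm, hy]
  -- 1 ∈ B gives a left inverse of b in A
  obtain ⟨a, ha⟩ := hgen 1 B.one_mem
  have hba : b * (a : Λ) = 1 := mul_eq_one_symm_of_semisimple ha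
  -- b * b ∈ B, so b * b = c * b for some c ∈ A; cancel b on the right
  obtain ⟨c, hc⟩ := hgen (b * b) (B.mul_mem hbB hbB)
  have hbA : b ∈ A := by
    have : (c : Λ) = b := by
      have := congrArg (fun z => z * (a : Λ)) hc
      simpa only [mul_assoc, hba, mul_one] using this
    rw [← this]; exact c.2
  -- hence B ⊆ A
  refine le_antisymm hAB ?_
  intro x hx
  obtain ⟨a', ha'⟩ := hgen x hx
  rw [← ha']
  exact A.mul_mem a'.2 hbA
end
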